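/- Define the operator L on twice continuously differentiable functions u : ℝ³ → ℝ by (Lu)(x,y,z) = e^{-2z}·∂²u/∂x²(x,y,z) + e^{2z}·∂²u/∂y²(x,y,z) + ∂²u/∂z²(x,y,z). Let A, B, C, D ∈ ℝ and let u(x,y,z) = y and v(x,y,z) = Az³ + Bz² + Cz + D. Then Lu = 0 identically, and L(Lv) = 0 identically. -/

import Mathlib

/-- Second derivative of `u : ℝ³ → ℝ` at `p` in the direction `e` (taken twice). -/
noncomputable def secondDeriv (u : ℝ × ℝ × ℝ → ℝ) (e p : ℝ × ℝ × ℝ) : ℝ :=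
  fderiv ℝ (fun q => fderiv ℝ u q e) p e

/-- The Laplace–Beltrami operator of Sol space acting on functions:
`(Lu)(x,y,z) = e^{-2z} u_{xx} + e^{2z} u_{yy} + u_{zz}`. -/
noncomputable def solLaplacian (u : ℝ × ℝ × ℝ → ℝ) (p : ℝ × ℝ × ℝ) : ℝ :=
  Real.exp (-2 * p.2.2) * secondDeriv u (1, 0, 0) p
    + Real.exp (2 * p.2.2) * secondDeriv u (0, 1, 0) p
    + secondDeriv u (0, 0, 1) p

noncomputable def piz : ℝ × ℝ × ℝ →L[ℝ] ℝ :=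
  (ContinuousLinearMap.snd ℝ ℝ ℝ).comp (ContinuousLinearMap.snd ℝ ℝ (ℝ × ℝ))

lemma hasFDerivAt_z (f : ℝ → ℝ) (m : ℝ) (p : ℝ × ℝ × ℝ) (hf : HasDerivAt f m p.2.2) :
    HasFDerivAt (fun q : ℝ × ℝ × ℝ => f q.2.2) (m • piz) p := by
  have hz : HasFDerivAt (fun q : ℝ × ℝ × ℝ => q.2.2) piz p := piz.hasFDerivAt
  exact hf.comp_hasFDerivAt p hz

lemma secondDeriv_z (f f' f'' : ℝ → ℝ) (hf : ∀ x, HasDerivAt f (f' x) x)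
    (hf' : ∀ x, HasDerivAt f' (f'' x) x) (e p : ℝ × ℝ × ℝ) :
    secondDeriv (fun q => f q.2.2) e p = f'' p.2.2 * e.2.2 * e.2.2 := by
  unfold secondDeriv
  have h1 : (fun q => fderiv ℝ (fun q : ℝ × ℝ × ℝ => f q.2.2) q e)
      = fun q : ℝ × ℝ × ℝ => f' q.2.2 * e.2.2 := by
    funext q
    rw [(hasFDerivAt_z f (f' q.2.2) q (hf q.2.2)).fderiv]
    simp [piz]
  rw [h1]
  have h2 : HasFDerivAt (fun q : ℝ × ℝ × ℝ => f' q.2.2 * e.2.2)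
      (e.2.2 • (f'' p.2.2 • piz)) p := by
    simpa using (hasFDerivAt_z f' (f'' p.2.2) p (hf' p.2.2)).mul_const e.2.2
  rw [h2.fderiv]
  simp [piz]; ring

lemma secondDeriv_y (e p : ℝ × ℝ × ℝ) : secondDeriv (fun q : ℝ × ℝ × ℝ => q.2.1) e p = 0 := by
  unfold secondDeriv
  have piy : ℝ × ℝ × ℝ →L[ℝ] ℝ :=
    (ContinuousLinearMap.fst ℝ ℝ ℝ).comp (ContinuousLinearMap.snd ℝ ℝ (ℝ × ℝ))
  have h1 : (fun q => fderiv ℝ (fun q : ℝ × ℝ × ℝ => q.2.1) q e)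
      = fun _ : ℝ × ℝ × ℝ => e.2.1 := by
    funext q
    have h : HasFDerivAt (fun q : ℝ × ℝ × ℝ => q.2.1)
        ((ContinuousLinearMap.fst ℝ ℝ ℝ).comp (ContinuousLinearMap.snd ℝ ℝ (ℝ × ℝ))) q :=
      ((ContinuousLinearMap.fst ℝ ℝ ℝ).comp (ContinuousLinearMap.snd ℝ ℝ (ℝ × ℝ))).hasFDerivAt
    rw [h.fderiv]
    rfl
  rw [h1, fderiv_fun_const]
  simp


theorem sol_biharmonic_map_example (A B C D : ℝ) :
    (∀ p : ℝ × ℝ × ℝ, solLaplacian (fun q => q.2.1) p = 0) ∧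
    (∀ p : ℝ × ℝ × ℝ,
      solLaplacian (solLaplacian
        (fun q => A * q.2.2 ^ 3 + B * q.2.2 ^ 2 + C * q.2.2 + D)) p = 0) := by
  have hf : ∀ x : ℝ, HasDerivAt (fun z => A * z ^ 3 + B * z ^ 2 + C * z + D)
      (3 * A * x ^ 2 + 2 * B * x + C) x := by
    intro x
    have := (((hasDerivAt_pow 3 x).const_mul A).add ((hasDerivAt_pow 2 x).const_mul B)).add
      (((hasDerivAt_id x).const_mul C).add (hasDerivAt_const x D))
    convert this using 1
    · rfl
    · rfl
    · funext z; simp [id]; ring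
    · simp; ring
  have hf' : ∀ x : ℝ, HasDerivAt (fun z => 3 * A * z ^ 2 + 2 * B * z + C)
      (6 * A * x + 2 * B) x := by
    intro x
    have := (((hasDerivAt_pow 2 x).const_mul (3 * A)).add
      ((hasDerivAt_id x).const_mul (2 * B))).add (hasDerivAt_const x C)
    convert this using 1
    · rfl
    · rfl
    · rfl
    push_cast; ring
  have hf'' : ∀ x : ℝ, HasDerivAt (fun z => 6 * A * z + 2 * B) (6 * A) x := by
    intro x
    have := ((hasDerivAt_id x).const_mul (6 * A)).add (hasDerivAt_const x (2 * B))
    convert this using 1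
    · rfl
    · rfl
    · rfl
    ring
  have hf''' : ∀ x : ℝ, HasDerivAt (fun _ : ℝ => 6 * A) 0 x := fun x => hasDerivAt_const x _
  have hL : solLaplacian (fun q : ℝ × ℝ × ℝ => A * q.2.2 ^ 3 + B * q.2.2 ^ 2 + C * q.2.2 + D)
      = fun q : ℝ × ℝ × ℝ => 6 * A * q.2.2 + 2 * B := by
    funext p
    unfold solLaplacian
    rw [secondDeriv_z _ _ _ hf hf', secondDeriv_z _ _ _ hf hf', secondDeriv_z _ _ _ hf hf']
    norm_num
  constructor
  · intro p
    unfold solLaplacian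
    rw [secondDeriv_y, secondDeriv_y, secondDeriv_y]
    ring
  · intro p
    rw [hL]
    unfold solLaplacian
    rw [secondDeriv_z _ _ _ hf'' hf''', secondDeriv_z _ _ _ hf'' hf''',
      secondDeriv_z _ _ _ hf'' hf''']
    norm_num
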